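/- For every integer y ≥ 3, f(y² − 1) ≤ y² − y − 1. -/

import Mathlib

/-
Since `y² - 1 = (y + 1)(y - 1)`, the factorization branch of the recursion with `k₁ = y + 1`,
`k₂ = y - 1` gives `f (y² - 1) ≤ (y² - 1) - (y + 1) - (y - 1) + 1 + max (f (y + 1)) (y - 1)`.
The crude bound `f k ≤ max 2 (k - 2)`, coming from the `f (k - 1) + 1` branch, gives
`f (y + 1) ≤ y - 1`, and the right-hand side collapses to `y² - y - 1`.
-/

/-- Fuel-based helper for the recursive function `f`. For `k ≤ fuel`, `faux fuel k`
computes the value of `f k`. -/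
def faux : ℕ → ℕ → ℕ
  | 0, _ => 1
  | fuel + 1, k =>
    if k ≤ 2 then 1
    else if k ≤ 4 then 2
    else
      min (faux fuel (k - 1) + 1)
        (((List.range k).filter (fun k1 => 3 ≤ k1 ∧ k1 ∣ k)).foldr
          (fun k1 acc => min (k - k1 - k / k1 + 1 + max (faux fuel k1) (k / k1)) acc)
          (faux fuel (k - 1) + 1))

/-- `f 1 = 1`, `f 2 = 1`, `f 3 = 2`, `f 4 = 2`, and for `k > 4`,
`f k = min (f (k-1) + 1)
          (min over factorizations k = k₁·k₂ with 3 ≤ k₁ < k, 2 ≤ k₂ of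
             k₁·k₂ - k₁ - k₂ + 1 + max (f k₁) k₂)`,
where the inner minimum is omitted when no such factorization exists.
(Note: for a divisor `k₁` of `k` with `3 ≤ k₁ < k`, the cofactor `k₂ = k / k₁`
automatically satisfies `k₂ ≥ 2`.) -/
def f (k : ℕ) : ℕ := faux k k

theorem List.foldr_min_le_of_mem {α β : Type*} [LinearOrder β] (g : α → β) (init : β)
    {l : List α} {a : α} (h : a ∈ l) :
    l.foldr (fun x acc => min (g x) acc) init ≤ g a := by
  induction l with
  | nil => simp at h
  | cons b t ih =>
    rcases List.mem_cons.mp h with rfl | h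
    · exact min_le_left _ _
    · exact (min_le_right _ _).trans (ih h)

theorem faux_le_max (fuel k : ℕ) : faux fuel k ≤ max 2 (k - 2) := by
  induction fuel generalizing k with
  | zero => simp [faux]
  | succ n ih =>
    rw [faux]
    split_ifs
    · omega
    · omega
    · have := ih (k - 1)
      exact (min_le_left _ _).trans (by omega)

theorem f_le_max (k : ℕ) : f k ≤ max 2 (k - 2) :=
  faux_le_max k k

-- The recursion only calls `faux` on smaller arguments, so any fuel `≥ k` gives the same value.
theorem faux_eq_f {n k : ℕ} (h : k ≤ n) : faux n k = f k := by
  induction k using Nat.strong_induction_on generalizing n with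
  | _ k ih =>
    rcases n with _ | n
    · obtain rfl : k = 0 := by omega
      rfl
    rcases k with _ | k
    · simp [f, faux]
    have hprev : faux n k = faux k k := ih k (by omega) (by omega)
    have hfactor : ∀ k₁ ∈ (List.range (k + 1)).filter (fun k₁ => 3 ≤ k₁ ∧ k₁ ∣ k + 1),
        faux n k₁ = faux k k₁ := fun k₁ hk₁ => by
      have : k₁ < k + 1 := List.mem_range.mp (List.mem_filter.mp hk₁).1
      rw [ih k₁ this (by omega), ih k₁ this (by omega)]
    rw [f, faux, faux, Nat.add_sub_cancel, hprev]
    congr 3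
    exact List.foldr_ext _ _ _ fun k₁ hk₁ _ => by rw [hfactor k₁ hk₁]

theorem f_mul_le {k₁ k₂ : ℕ} (h₁ : 3 ≤ k₁) (h₂ : 2 ≤ k₂) :
    f (k₁ * k₂) ≤ k₁ * k₂ - k₁ - k₂ + 1 + max (f k₁) k₂ := by
  have h2k : 2 * k₁ ≤ k₁ * k₂ := by nlinarith
  have hmem : k₁ ∈ (List.range (k₁ * k₂)).filter (fun k => 3 ≤ k ∧ k ∣ k₁ * k₂) := by
    simp only [List.mem_filter, List.mem_range, decide_eq_true_eq]
    exact ⟨by omega, h₁, dvd_mul_right k₁ k₂⟩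
  have hfuel : f (k₁ * k₂) = faux (k₁ * k₂ - 1 + 1) (k₁ * k₂) := by
    rw [Nat.sub_add_cancel (by omega)]; rfl
  rw [hfuel, faux, if_neg (by omega), if_neg (by omega)]
  refine (min_le_right _ _).trans ((List.foldr_min_le_of_mem _ _ hmem).trans ?_)
  rw [Nat.mul_div_cancel_left _ (by omega), faux_eq_f (by omega)]

/-- For every integer `y ≥ 3`, `f (y² - 1) ≤ y² - y - 1`. -/
theorem stmt_4 (y : ℕ) (hy : 3 ≤ y) :
    f (y ^ 2 - 1) ≤ y ^ 2 - y - 1 := by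
  have hfactor : y ^ 2 - 1 = (y + 1) * (y - 1) := by
    rw [← Nat.sq_sub_sq, one_pow]
  have hsq : 3 * y ≤ y ^ 2 := by nlinarith
  have hcoarse : f (y + 1) ≤ y - 1 := (f_le_max (y + 1)).trans (by omega)
  rw [hfactor]
  refine (f_mul_le (by omega) (by omega)).trans ?_
  rw [max_eq_right hcoarse, ← hfactor]
  omega
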